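/- Let n ≥ 1, let A be a real n×n matrix with Aᵀ = −A, and let d : Fin n → ℝ. Then every complex eigenvalue z of the matrix A + diagonal(d) satisfies min_{j} d_j ≤ Re z ≤ max_{j} d_j, where the minimum and maximum are over all indices j. -/

import Mathlib

/-!
If `(K + D) v = z v` with `K` skew-Hermitian and `D = diagonal d` real, then taking the real
part of `v* (K + D) v = z ‖v‖²` kills the `K` term, so `Re z = ∑ d_i |v_i|² / ∑ |v_i|²` is a
weighted average of the `d_i`. The complexification of a real antisymmetric matrix is
skew-Hermitian.
-/

open Matrix

namespace Matrix

variable {n 𝕜 : Type*} [Fintype n] [RCLike 𝕜]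

theorem exists_mulVec_eq_smul_of_mem_spectrum {K : Type*} [Field K] [DecidableEq n]
    {M : Matrix n n K} {z : K} (hz : z ∈ spectrum K M) : ∃ v ≠ 0, M *ᵥ v = z • v := by
  rw [← spectrum_toLin', ← Module.End.hasEigenvalue_iff_mem_spectrum] at hz
  obtain ⟨v, hv⟩ := hz.exists_hasEigenvector
  exact ⟨v, hv.2, by simpa using hv.apply_eq_smul⟩

theorem star_dotProduct_self_eq_sum_norm_sq (v : n → 𝕜) :
    star v ⬝ᵥ v = ((∑ i, ‖v i‖ ^ 2 : ℝ) : 𝕜) := by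
  simp [dotProduct, RCLike.conj_mul]

theorem sum_norm_sq_pos {v : n → 𝕜} (hv : v ≠ 0) : 0 < ∑ i, ‖v i‖ ^ 2 := by
  obtain ⟨i, hi⟩ := Function.ne_iff.mp hv
  exact Finset.sum_pos' (fun _ _ => by positivity)
    ⟨i, Finset.mem_univ i, pow_pos (norm_pos_iff.mpr hi) 2⟩

theorem re_star_dotProduct_mulVec_self_eq_zero {K : Matrix n n 𝕜} (hK : Kᴴ = -K) (v : n → 𝕜) :
    RCLike.re (star v ⬝ᵥ K *ᵥ v) = 0 := by
  have hconj : star (star v ⬝ᵥ K *ᵥ v) = -(star v ⬝ᵥ K *ᵥ v) := by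
    rw [← star_dotProduct, star_mulVec, ← dotProduct_mulVec, hK, neg_mulVec, dotProduct_neg]
  have := congrArg RCLike.re hconj
  simp only [RCLike.star_def, RCLike.conj_re, map_neg] at this
  linarith

theorem re_star_dotProduct_diagonal_mulVec [DecidableEq n] (d : n → ℝ) (v : n → 𝕜) :
    RCLike.re (star v ⬝ᵥ diagonal (fun i => (d i : 𝕜)) *ᵥ v) = ∑ i, d i * ‖v i‖ ^ 2 := by
  rw [dotProduct, map_sum]
  refine Finset.sum_congr rfl fun i _ => ?_
  rw [mulVec_diagonal, Pi.star_apply, RCLike.star_def, mul_left_comm, RCLike.conj_mul,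
    RCLike.re_ofReal_mul]
  norm_cast

theorem re_mul_sum_norm_sq_of_mulVec_eq_smul {M : Matrix n n 𝕜} {v : n → 𝕜} {z : 𝕜}
    (hv : M *ᵥ v = z • v) :
    RCLike.re z * ∑ i, ‖v i‖ ^ 2 = RCLike.re (star v ⬝ᵥ M *ᵥ v) := by
  rw [hv, dotProduct_smul, star_dotProduct_self_eq_sum_norm_sq, smul_eq_mul, RCLike.re_mul_ofReal]

theorem re_eigenvalue_skewHermitian_add_diagonal_eq_centerMass [DecidableEq n]
    {K : Matrix n n 𝕜} (hK : Kᴴ = -K) (d : n → ℝ) {v : n → 𝕜} (hv0 : v ≠ 0) {z : 𝕜}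
    (hv : (K + diagonal (fun i => (d i : 𝕜))) *ᵥ v = z • v) :
    RCLike.re z = Finset.univ.centerMass (fun i => ‖v i‖ ^ 2) d := by
  have hre := re_mul_sum_norm_sq_of_mulVec_eq_smul hv
  rw [add_mulVec, dotProduct_add, map_add, re_star_dotProduct_mulVec_self_eq_zero hK,
    re_star_dotProduct_diagonal_mulVec, zero_add] at hre
  rw [Finset.centerMass, eq_inv_smul_iff₀ (sum_norm_sq_pos hv0).ne', smul_eq_mul, mul_comm, hre]
  simp [mul_comm]

end Matrix

/-- **Bendixson inequalities for an antisymmetric plus diagonal real matrix.**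
If `Aᵀ = -A` and `d : Fin n → ℝ`, then every complex eigenvalue `z` of
`A + diagonal d` satisfies `min_j d j ≤ Re z ≤ max_j d j`. -/
theorem bendixson_antisymm_add_diagonal (n : ℕ) (hn : 1 ≤ n)
    (A : Matrix (Fin n) (Fin n) ℝ) (hA : Aᵀ = -A) (d : Fin n → ℝ) (z : ℂ)
    (hz : z ∈ spectrum ℂ ((A + Matrix.diagonal d).map Complex.ofReal)) :
    Finset.univ.inf' ⟨⟨0, hn⟩, Finset.mem_univ _⟩ d ≤ z.re ∧
      z.re ≤ Finset.univ.sup' ⟨⟨0, hn⟩, Finset.mem_univ _⟩ d := by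
  obtain ⟨v, hv0, hv⟩ := exists_mulVec_eq_smul_of_mem_spectrum hz
  have hskew : (A.map Complex.ofReal)ᴴ = -A.map Complex.ofReal := by
    rw [← conjTranspose_map _ (fun _ => by simp), conjTranspose_eq_transpose_of_trivial,
      hA, Matrix.map_neg _ Complex.ofReal_neg]
  rw [Matrix.map_add _ Complex.ofReal_add, diagonal_map Complex.ofReal_zero] at hv
  have hzre : z.re = _ := re_eigenvalue_skewHermitian_add_diagonal_eq_centerMass hskew d hv0 hv
  have hpos := sum_norm_sq_pos hv0
  exact ⟨hzre ▸ Finset.inf_le_centerMass (fun _ _ => by positivity) hpos,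
    hzre ▸ Finset.centerMass_le_sup (fun _ _ => by positivity) hpos⟩
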